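/- Let G be a finite group, p a prime, N = O_p(G) the p-core of G, and a, b ∈ G p-regular elements. If aN and bN are conjugate in G/N, then a and b are conjugate in G. -/

import Mathlib

/-!
Induction on `|N|`. If `N ≠ 1`, the centre `Z` of `N` is a nontrivial abelian normal `p`-subgroup
of `G` and the image of `N` in `G ⧸ Z` is smaller, so by induction `aZ` and `bZ` are conjugate; this
reduces the problem to an abelian `N`.

For abelian `N` write `b = a n` with `n ∈ N` and let `θ` be conjugation by `a⁻¹` on `N`. Then
`(a n)^k = a^k ∏_{j<k} θ^j n`, so `a^m = b^m = 1` for `m = |a| |b|`, which is prime to `p`, forces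
`∏_{j<m} θ^j n = 1`. The product `D` of the partial products then satisfies `θ D / D = n^{-m}`, and
since `m`-th roots exist in the `p`-group `N`, `x = D^{-1/m}` satisfies `θ x / x = n`, i.e.
`x a x⁻¹ = b`.
-/

open Finset
open scoped IsMulCommutative

theorem exists_map_div_eq_of_prod_iterate_eq_one {A : Type*} [CommGroup A] {m : ℕ}
    (hm : Function.Bijective fun x : A ↦ x ^ m) (θ : A →* A) {n : A}
    (hn : ∏ k ∈ range m, θ^[k] n = 1) : ∃ x, θ x / x = n := by
  set D := ∏ k ∈ range m, ∏ j ∈ range k, θ^[j] n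
  have htelescope (k : ℕ) :
      θ (∏ j ∈ range k, θ^[j] n) / ∏ j ∈ range k, θ^[j] n = θ^[k] n / n := by
    rw [map_prod, ← prod_div_distrib]
    simp_rw [← Function.iterate_succ_apply' θ]
    exact prod_range_div (fun j ↦ θ^[j] n) k
  have hD : θ D / D = (n ^ m)⁻¹ := by
    rw [map_prod, ← prod_div_distrib, prod_congr rfl fun k _ ↦ htelescope k, prod_div_distrib,
      hn, prod_const, card_range, one_div]
  obtain ⟨x, hx⟩ := hm.2 D⁻¹
  refine ⟨x, hm.1 ?_⟩
  simp only at hx ⊢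
  rw [div_pow, ← map_pow, hx, map_inv, inv_div_inv, ← inv_div, hD, inv_inv]

theorem isConj_mul_of_pow_eq_one {G : Type*} [Group G] {N : Subgroup G} [N.Normal]
    [IsMulCommutative N] {m : ℕ} (hm : Function.Bijective fun x : N ↦ x ^ m) {c n : G}
    (hn : n ∈ N) (hc : c ^ m = 1) (hcn : (c * n) ^ m = 1) : IsConj c (c * n) := by
  let θ : N →* N := (MulAut.conjNormal c⁻¹).toMonoidHom
  have hθ (y : N) : (θ y : G) = c⁻¹ * y * c := by simp [θ]
  have hpow (k : ℕ) : (c * n) ^ k = c ^ k * ↑(∏ j ∈ range k, θ^[j] ⟨n, hn⟩) := by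
    induction k with
    | zero => simp
    | succ k ih =>
      simp only [pow_succ, ih, prod_range_succ', Function.iterate_succ_apply',
        Function.iterate_zero_apply, ← map_prod, Subgroup.coe_mul, hθ]
      group
  have hnorm : ∏ j ∈ range m, θ^[j] ⟨n, hn⟩ = 1 := by
    simpa [hc, hcn] using (hpow m).symm
  obtain ⟨x, hx⟩ := exists_map_div_eq_of_prod_iterate_eq_one hm θ hnorm
  refine isConj_iff.mpr ⟨x, ?_⟩
  have hx' : c⁻¹ * x * c / x = n := by simpa [hθ] using congrArg Subtype.val hx
  rw [← hx', div_eq_mul_inv]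
  group

theorem IsConj.orderOf_eq {G : Type*} [Group G] {a b : G} (h : IsConj a b) :
    orderOf a = orderOf b := by
  obtain ⟨c, hc⟩ := h
  exact hc.orderOf_eq

theorem IsConj.exists_isConj_inv_mul_mem {G : Type*} [Group G] {N : Subgroup G} [N.Normal]
    {a b : G} (h : IsConj (a : G ⧸ N) b) : ∃ a', IsConj a a' ∧ a'⁻¹ * b ∈ N := by
  obtain ⟨u, hu⟩ := isConj_iff.mp h
  obtain ⟨g, rfl⟩ := QuotientGroup.mk_surjective u
  exact ⟨g * a * g⁻¹, isConj_iff.mpr ⟨g, rfl⟩, QuotientGroup.eq.mp hu⟩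

theorem Subgroup.card_map_mk'_lt {G : Type*} [Group G] {N Z : Subgroup G} [Z.Normal] [Finite N]
    (hZN : Z ≤ N) (hZ : Z ≠ ⊥) : Nat.card (N.map (QuotientGroup.mk' Z)) < Nat.card N := by
  have : Finite Z := Finite.of_injective _ (Subgroup.inclusion_injective hZN)
  have hmul := relIndex_mul_relIndex ⊥ Z N bot_le hZN
  rw [relIndex_bot_left, relIndex_bot_left, ← QuotientGroup.ker_mk' Z, relIndex_ker,
    QuotientGroup.ker_mk'] at hmul
  have := (one_lt_card_iff_ne_bot Z).mpr hZ
  have := Nat.card_pos (α := N)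
  nlinarith

namespace IsPGroup

variable {G : Type*} [Group G] {p : ℕ}

theorem isConj_of_inv_mul_mem_of_isMulCommutative (hp : p.Prime) {N : Subgroup G} [N.Normal]
    [IsMulCommutative N] (hN : IsPGroup p N) {a b : G} (ha : ¬ p ∣ orderOf a)
    (hb : ¬ p ∣ orderOf b) (hab : a⁻¹ * b ∈ N) : IsConj a b := by
  have : Fact p.Prime := ⟨hp⟩
  have hm : ¬ p ∣ orderOf a * orderOf b := fun h ↦ (hp.dvd_mul.mp h).elim ha hb
  have hconj := isConj_mul_of_pow_eq_one (hN.powEquiv' hm).bijective hab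
    (by rw [pow_mul, pow_orderOf_eq_one, one_pow])
    (by rw [mul_inv_cancel_left, mul_comm, pow_mul, pow_orderOf_eq_one, one_pow])
  rwa [mul_inv_cancel_left] at hconj

theorem isConj_of_inv_mul_mem [Finite G] (hp : p.Prime) {N : Subgroup G} [N.Normal]
    (hN : IsPGroup p N) {a b : G} (ha : ¬ p ∣ orderOf a) (hb : ¬ p ∣ orderOf b)
    (hab : a⁻¹ * b ∈ N) : IsConj a b := by
  induction hcard : Nat.card N using Nat.strong_induction_on generalizing G with
  | _ k ih =>
  rcases eq_or_ne N ⊥ with rfl | hbot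
  · rw [Subgroup.mem_bot, inv_mul_eq_one] at hab
    rw [hab]
  have : Fact p.Prime := ⟨hp⟩
  have : Nontrivial N := (Subgroup.nontrivial_iff_ne_bot N).mpr hbot
  set Z := (Subgroup.center N).map N.subtype
  have hZN : Z ≤ N := N.map_subtype_le _
  have hZ : Z ≠ ⊥ := by
    rw [Ne, Subgroup.map_eq_bot_iff_of_injective _ N.subtype_injective]
    exact (Subgroup.nontrivial_iff_ne_bot _).mp hN.center_nontrivial
  set φ := QuotientGroup.mk' Z
  have hconj : IsConj (a : G ⧸ Z) b :=
    ih _ (hcard ▸ Subgroup.card_map_mk'_lt hZN hZ) (hN.map φ)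
      (fun h ↦ ha (h.trans (orderOf_map_dvd φ a))) (fun h ↦ hb (h.trans (orderOf_map_dvd φ b)))
      (Subgroup.mem_map_of_mem φ hab) rfl
  obtain ⟨a', haa', ha'b⟩ := hconj.exists_isConj_inv_mul_mem
  exact haa'.trans <| (hN.to_le hZN).isConj_of_inv_mul_mem_of_isMulCommutative hp
    (haa'.orderOf_eq ▸ ha) hb ha'b

end IsPGroup

theorem isConj_of_isConj_quotient_pCore_general (G : Type*) [Group G] [Finite G]
    (p : ℕ) (hp : p.Prime) (N : Subgroup G) [N.Normal] (hN : IsPGroup p N)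
    (a b : G) (ha : ¬ p ∣ orderOf a) (hb : ¬ p ∣ orderOf b)
    (h : IsConj ((a : G ⧸ N)) ((b : G ⧸ N))) :
    IsConj a b := by
  obtain ⟨a', haa', ha'b⟩ := h.exists_isConj_inv_mul_mem
  exact haa'.trans <| hN.isConj_of_inv_mul_mem hp (haa'.orderOf_eq ▸ ha) hb ha'b

theorem isConj_of_isConj_quotient_pCore (G : Type*) [Group G] [Finite G]
    (p : ℕ) (hp : p.Prime) (N : Subgroup G) [N.Normal] (hN : IsPGroup p N)
    (hmax : ∀ K : Subgroup G, K.Normal → IsPGroup p K → K ≤ N)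
    (a b : G) (ha : ¬ p ∣ orderOf a) (hb : ¬ p ∣ orderOf b)
    (h : IsConj ((a : G ⧸ N)) ((b : G ⧸ N))) :
    IsConj a b :=
  isConj_of_isConj_quotient_pCore_general G p hp N hN a b ha hb h
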